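/- Let U be a set of M ≥ 2 distinct unit vectors in ℝⁿ, all satisfying v · e_n > 0, where e_n = (0, …, 0, 1). Then there is an ordering {u_1, …, u_M} of the vectors in U and a collection of pairwise disjoint nonempty sectors S_1, …, S_{M−1} ⊆ ℝⁿ such that for every l = 2, …, M and every i = 1, …, M−1: S_i ⊆ Γ_{u_l} if i < l, and S_i ∩ Γ_{u_l} = ∅ if i ≥ l. -/

import Mathlib

/-!
Centrally project the vectors of `U` onto the affine hyperplane `⟪e, x⟫ = 1`, where `e = e_n`.
Distinct unit vectors with `⟪e, v⟫ > 0` have distinct projections, so a generic linear functional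
`a` separates them: the slopes `⟪a, v⟫ / ⟪e, v⟫` are pairwise distinct. Order `U` by increasing
slope. Since `⟪a - c • e, v⟫ = ⟪e, v⟫ (⟪a, v⟫ / ⟪e, v⟫ - c)`, the point `a - c • e` with `c`
strictly between the `i`-th and `(i+1)`-st slope is negative on `u_0, …, u_i` and positive on the
remaining vectors, so the sector `S_i` of points with exactly this sign pattern is nonempty.
-/

open scoped RealInnerProductSpace

/-- A sector in `ℝⁿ`: a nonempty set of the form
`{x : x·v_j > 0 for 1 ≤ j ≤ s, x·v_j < 0 for s < j ≤ r}` for some distinct unit vectors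
`v_1, …, v_r` and some `0 ≤ s ≤ r`. -/
def IsSector {n : ℕ} (S : Set (EuclideanSpace ℝ (Fin n))) : Prop :=
  S.Nonempty ∧
    ∃ (r s : ℕ) (v : Fin r → EuclideanSpace ℝ (Fin n)), s ≤ r ∧
      Function.Injective v ∧ (∀ i, ‖v i‖ = 1) ∧
      S = {x | (∀ i : Fin r, (i : ℕ) < s → 0 < ⟪x, v i⟫) ∧
               (∀ i : Fin r, s ≤ (i : ℕ) → ⟪x, v i⟫ < 0)}

section InnerProductSpace

variable {E : Type*} [NormedAddCommGroup E] [InnerProductSpace ℝ E]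

lemma eq_of_smul_eq_smul_of_norm_eq {v w : E} (hvw : ‖v‖ = ‖w‖) {a b : ℝ} (ha : 0 < a)
    (hb : 0 < b) (h : a • v = b • w) : v = w := by
  have hray : SameRay ℝ v (b • w) := h ▸ SameRay.sameRay_pos_smul_right v ha
  have hray' := hray.pos_smul_right (inv_pos.2 hb)
  rw [inv_smul_smul₀ hb.ne'] at hray'
  exact hray'.eq_of_norm_eq hvw

lemma exists_injOn_inner_div {U : Finset E} {e : E} (hunit : ∀ v ∈ U, ‖v‖ = 1)
    (hpos : ∀ v ∈ U, 0 < ⟪e, v⟫) : ∃ a : E, Set.InjOn (fun v => ⟪a, v⟫ / ⟪e, v⟫) U := by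
  let d : U.offDiag → E := fun q => ⟪e, q.1.2⟫ • q.1.1 - ⟪e, q.1.1⟫ • q.1.2
  have hd : ∀ q, d q ≠ 0 := by
    rintro ⟨⟨v, w⟩, hq⟩ hdq
    obtain ⟨hv, hw, hne⟩ := Finset.mem_offDiag.1 hq
    exact hne (eq_of_smul_eq_smul_of_norm_eq ((hunit v hv).trans (hunit w hw).symm)
      (hpos w hw) (hpos v hv) (sub_eq_zero.1 hdq))
  obtain ⟨a, ha⟩ := Module.Dual.exists_forall_ne_zero_of_forall_exists
    (fun q => innerₗ E (d q)) fun q => ⟨d q, by simpa using hd q⟩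
  refine ⟨a, fun v hv w hw hvw => by_contra fun hne =>
    ha ⟨(v, w), Finset.mem_offDiag.2 ⟨hv, hw, hne⟩⟩ ?_⟩
  rw [div_eq_div_iff (hpos v hv).ne' (hpos w hw).ne'] at hvw
  simp only [innerₗ_apply_apply, d, real_inner_comm a, inner_sub_right, real_inner_smul_right]
  linarith

lemma inner_sub_smul_eq_mul_sub_div (a e v : E) (c : ℝ) (he : ⟪e, v⟫ ≠ 0) :
    ⟪a - c • e, v⟫ = ⟪e, v⟫ * (⟪a, v⟫ / ⟪e, v⟫ - c) := by
  rw [inner_sub_left, real_inner_smul_left, mul_sub, mul_div_cancel₀ _ he, mul_comm]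

end InnerProductSpace

lemma Finset.exists_strictMono_comp {α β : Type*} [LinearOrder β] {U : Finset α} {M : ℕ}
    (hcard : U.card = M) {f : α → β} (hf : Set.InjOn f U) :
    ∃ u : Fin M → α, (∀ l, u l ∈ U) ∧ StrictMono (f ∘ u) := by
  let u₀ : Fin M → α := fun l => (U.equivFinOfCardEq hcard).symm l
  have hinj : Function.Injective (f ∘ u₀) := fun l m h =>
    (U.equivFinOfCardEq hcard).symm.injective
      (Subtype.ext (hf (Subtype.prop _) (Subtype.prop _) h))
  exact ⟨u₀ ∘ Tuple.sort (f ∘ u₀), fun l => Subtype.prop _,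
    (Tuple.monotone_sort _).strictMono_of_injective (hinj.comp (Equiv.injective _))⟩

section CutSector

variable {E : Type*} [NormedAddCommGroup E] [InnerProductSpace ℝ E] {M : ℕ}

def cutSector (u : Fin M → E) (i : ℕ) : Set E :=
  {x | ∀ j : Fin M, ((j : ℕ) ≤ i → ⟪x, u j⟫ < 0) ∧ (i < j → 0 < ⟪x, u j⟫)}

lemma cutSector_nonempty {u : Fin M → E} {a e : E} (he : ∀ j, 0 < ⟪e, u j⟫)
    (hmono : StrictMono fun j => ⟪a, u j⟫ / ⟪e, u j⟫) {i : ℕ} (hi : i + 1 < M) :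
    (cutSector u i).Nonempty := by
  set κ := fun j => ⟪a, u j⟫ / ⟪e, u j⟫
  obtain ⟨c, hic, hci⟩ := exists_between (hmono (Fin.mk_lt_mk.2 (Nat.lt_succ_self i)) :
    κ ⟨i, by omega⟩ < κ ⟨i + 1, hi⟩)
  refine ⟨a - c • e, fun j => ⟨fun hj => ?_, fun hj => ?_⟩⟩ <;>
    rw [inner_sub_smul_eq_mul_sub_div _ _ _ _ (he j).ne']
  · have : κ j ≤ κ ⟨i, by omega⟩ := hmono.monotone (Fin.mk_le_mk.2 hj)
    exact mul_neg_of_pos_of_neg (he j) (show κ j - c < 0 by linarith)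
  · have : κ ⟨i + 1, hi⟩ ≤ κ j := hmono.monotone (Fin.mk_le_mk.2 hj)
    exact mul_pos (he j) (show 0 < κ j - c by linarith)

lemma disjoint_cutSector_of_lt (u : Fin M → E) {i j : ℕ} (hij : i < j) (hj : j < M) :
    Disjoint (cutSector u i) (cutSector u j) :=
  Set.disjoint_left.2 fun _ hi hj' =>
    ((hi ⟨i + 1, by omega⟩).2 (Nat.lt_succ_self i)).not_gt ((hj' ⟨i + 1, by omega⟩).1 hij)

end CutSector

/-- Listing `u` backwards puts the vectors on which the sector is positive first. -/
lemma isSector_cutSector {n M : ℕ} {u : Fin M → EuclideanSpace ℝ (Fin n)}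
    (hu : Function.Injective u) (hunit : ∀ j, ‖u j‖ = 1) {i : ℕ}
    (hne : (cutSector u i).Nonempty) : IsSector (cutSector u i) := by
  refine ⟨hne, M, M - 1 - i, u ∘ Fin.rev, by omega, hu.comp Fin.rev_injective,
    fun k => hunit _, ?_⟩
  ext x
  simp only [cutSector, Set.mem_ofPred_eq, Function.comp_apply]
  refine ⟨fun h => ⟨fun k hk => (h k.rev).2 ?_, fun k hk => (h k.rev).1 ?_⟩,
    fun ⟨hpos, hneg⟩ j => ⟨fun hj => ?_, fun hj => ?_⟩⟩
  · rw [Fin.val_rev]; omega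
  · rw [Fin.val_rev]; omega
  · simpa using hneg j.rev (by rw [Fin.val_rev]; omega)
  · simpa using hpos j.rev (by rw [Fin.val_rev]; omega)

/-- The geometric lemma: if `U` is a set of `M ≥ 2` distinct unit vectors in `ℝⁿ`, all with
positive last coordinate (`v·e_n > 0`), then there is an ordering `u_0, …, u_{M-1}` of `U` and
pairwise disjoint nonempty sectors `S_0, …, S_{M-2}` such that (in 0-based indexing) for every
`l ≥ 1` and every `i`: `S_i ⊆ Γ_{u_l}` if `i < l`, and `S_i ∩ Γ_{u_l} = ∅` if `i ≥ l`,
where `Γ_v = {x : x·v > 0}`. -/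
theorem exists_ordering_and_sectors (n M : ℕ) (hn : 1 ≤ n)
    (U : Finset (EuclideanSpace ℝ (Fin n))) (hcard : U.card = M)
    (hunit : ∀ v ∈ U, ‖v‖ = 1)
    (hpos : ∀ v ∈ U, 0 < ⟪v, EuclideanSpace.single (⟨n - 1, by omega⟩ : Fin n) (1 : ℝ)⟫) :
    ∃ u : Fin M → EuclideanSpace ℝ (Fin n), Function.Injective u ∧ (∀ l, u l ∈ U) ∧
      ∃ S : Fin (M - 1) → Set (EuclideanSpace ℝ (Fin n)),
        (∀ i, IsSector (S i)) ∧
        (∀ i j, i ≠ j → S i ∩ S j = ∅) ∧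
        (∀ (l : Fin M) (i : Fin (M - 1)), 1 ≤ (l : ℕ) →
          ((i : ℕ) < (l : ℕ) → S i ⊆ {x | 0 < ⟪x, u l⟫}) ∧
          ((l : ℕ) ≤ (i : ℕ) → S i ∩ {x | 0 < ⟪x, u l⟫} = ∅)) := by
  have hpos' : ∀ v ∈ U, 0 < ⟪EuclideanSpace.single ⟨n - 1, by omega⟩ 1, v⟫ := fun v hv =>
    real_inner_comm v _ ▸ hpos v hv
  obtain ⟨a, ha⟩ := exists_injOn_inner_div hunit hpos'
  obtain ⟨u, humem, hmono⟩ := U.exists_strictMono_comp hcard ha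
  have hu : Function.Injective u := hmono.injective.of_comp
  refine ⟨u, hu, humem, fun i => cutSector u i, fun i => ?_, fun i j hij => ?_,
    fun l i _ => ⟨fun hil x hx => (hx l).2 hil, fun hli => ?_⟩⟩
  · exact isSector_cutSector hu (fun l => hunit _ (humem l))
      (cutSector_nonempty (fun j => hpos' _ (humem j)) hmono (by omega))
  · rw [← Set.disjoint_iff_inter_eq_empty]
    rcases lt_or_gt_of_ne (Fin.val_ne_of_ne hij) with h | h
    · exact disjoint_cutSector_of_lt u h (by omega)
    · exact (disjoint_cutSector_of_lt u h (by omega)).symm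
  · exact Set.eq_empty_iff_forall_notMem.2 fun x ⟨hx, hxl⟩ => ((hx l).1 hli).not_gt hxl
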